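/- For all 0 ≤ j, l ≤ q−1 and all integers c, c': if 0 ≤ j+l−1 ≤ q−1 then [e(j,c), e(l,c')] = (α(l,c')·C(j+l−1,l) − α(j,c)·C(j+l−1,j))·e(j+l−1, c+c'), while if j+l−1 < 0 or j+l−1 > q−1 then [e(j,c), e(l,c')] = 0. -/
import Mathlib


open scoped BigOperators

/-- Binomial coefficient of integers, zero unless `0 ≤ b ≤ a`. -/
def intChoose (a b : ℤ) : ℤ :=
  if 0 ≤ b ∧ b ≤ a then (a.toNat.choose b.toNat : ℤ) else 0

/-- The structure constant `N(i,j,k,l)`. -/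
def Ncoef (i j k l : ℤ) : ℤ :=
  intChoose (i + k - 1) i * intChoose (j + l - 1) (j - 1) -
    intChoose (i + k - 1) (i - 1) * intChoose (j + l - 1) j

variable (F : Type*) [Field F]

/-- The underlying space of `H(2;(n1,n2);Φ(1))`, with basis indexed by `Fin r × Fin q`. -/
abbrev Hsp (r q : ℕ) : Type _ := Fin r × Fin q → F

/-- The divided power monomial `x^(i) y^(j)`, read as `0` when out of range. -/
noncomputable def mm (r q : ℕ) (i j : ℤ) : Hsp F r q :=
  if h : 0 ≤ i ∧ i < (r : ℤ) ∧ 0 ≤ j ∧ j < (q : ℤ) then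
    Pi.single (⟨i.toNat, by omega⟩, ⟨j.toNat, by omega⟩) 1
  else 0

/-- The bracket on basis elements of `H(2;(n1,n2);Φ(1))`. -/
noncomputable def bB (r q : ℕ) (a b : Fin r × Fin q) : Hsp F r q :=
  if 0 < (a.1 : ℤ) + (b.1 : ℤ) then
    ((Ncoef (a.1 : ℤ) (a.2 : ℤ) (b.1 : ℤ) (b.2 : ℤ) : ℤ) : F) •
      mm F r q ((a.1 : ℤ) + (b.1 : ℤ) - 1) ((a.2 : ℤ) + (b.2 : ℤ) - 1)
  else
    ((intChoose ((a.2 : ℤ) + (b.2 : ℤ) - 1) (b.2 : ℤ) -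
        intChoose ((a.2 : ℤ) + (b.2 : ℤ) - 1) (a.2 : ℤ) : ℤ) : F) •
      mm F r q ((r : ℤ) - 1) ((a.2 : ℤ) + (b.2 : ℤ) - 1)

/-- The bilinear bracket of `H(2;(n1,n2);Φ(1))`, extending `bB` bilinearly. -/
noncomputable def br (r q : ℕ) (u v : Hsp F r q) : Hsp F r q :=
  ∑ a : Fin r × Fin q, ∑ b : Fin r × Fin q, (u a * v b) • bB F r q a b

/-- The eigenvalue `α(j,c) = (1-j)ρ + cσ`. -/
noncomputable def alphaF (σ ρ : F) (j c : ℤ) : F := (1 - (j : F)) * ρ + (c : F) * σ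

/-- The eigenvector `e(j,c)` (case `n1 = 1`, so `r = p`). -/
noncomputable def ee (p q : ℕ) (σ ρ : F) (j c : ℤ) : Hsp F p q :=
  ((j : F) * σ ^ (p - 1)) • mm F p q ((p : ℤ) - 1) j +
    ∑ i ∈ Finset.range p, alphaF F σ ρ j c ^ i • mm F p q (i : ℤ) j

section Aux
lemma intChoose_natCast (s i : ℕ) : intChoose (s : ℤ) (i : ℤ) = (s.choose i : ℤ) := by
  unfold intChoose
  by_cases h : (i : ℤ) ≤ (s : ℤ)
  · simp [h]
  · have hi : s < i := by omega
    rw [if_neg (by omega), Nat.choose_eq_zero_of_lt hi]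
    simp

lemma intChoose_neg {a b : ℤ} (h : b < 0) : intChoose a b = 0 := by
  unfold intChoose; rw [if_neg (by omega)]

lemma intChoose_of_lt {a b : ℤ} (h : a < b) : intChoose a b = 0 := by
  unfold intChoose; rw [if_neg (by omega)]

lemma intChoose_symm (j l : ℤ) (hj : 0 ≤ j) (hl : 0 ≤ l) :
    intChoose (j + l - 1) (j - 1) = intChoose (j + l - 1) l := by
  rcases eq_or_lt_of_le hj with hj0 | hj1
  · rw [intChoose_neg (by omega)]
    rcases eq_or_lt_of_le hl with hl0 | hl1
    · rw [intChoose_of_lt (by omega)]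
    · rw [intChoose_of_lt (by omega)]
  · -- j ≥ 1
    obtain ⟨jn, rfl⟩ := Int.eq_ofNat_of_zero_le hj
    obtain ⟨ln, rfl⟩ := Int.eq_ofNat_of_zero_le hl
    have h1 : (jn : ℤ) + ln - 1 = ((jn + ln - 1 : ℕ) : ℤ) := by omega
    have h2 : (jn : ℤ) - 1 = ((jn - 1 : ℕ) : ℤ) := by omega
    rw [h1, h2, intChoose_natCast, intChoose_natCast]
    congr 1
    have hle : jn - 1 ≤ jn + ln - 1 := by omega
    have h6 : jn + ln - 1 - (jn - 1) = ln := by omega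
    rw [← Nat.choose_symm hle, h6]

lemma key_lin (j l : ℤ) (hj : 0 ≤ j) (hl : 0 ≤ l) :
    l * intChoose (j + l - 1) l = j * intChoose (j + l - 1) j := by
  rcases eq_or_lt_of_le hj with hj0 | hj1
  · subst hj0
    rcases eq_or_lt_of_le hl with hl0 | hl1
    · rw [intChoose_of_lt (by omega)]; ring
    · rw [intChoose_of_lt (by omega)]; ring
  · rcases eq_or_lt_of_le hl with hl0 | hl1
    · subst hl0
      rw [intChoose_of_lt (show j+0-1 < j by omega)]; ring
    · obtain ⟨jn, rfl⟩ := Int.eq_ofNat_of_zero_le hj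
      obtain ⟨ln, rfl⟩ := Int.eq_ofNat_of_zero_le hl
      have h1 : (jn : ℤ) + ln - 1 = ((jn + ln - 1 : ℕ) : ℤ) := by omega
      rw [h1, intChoose_natCast, intChoose_natCast]
      have hjn : 1 ≤ jn := by omega
      have hln : 1 ≤ ln := by omega
      set n := jn + ln - 1 with hn
      have key : ln * n.choose ln = jn * n.choose jn := by
        have h3 : n.choose jn * jn = n.choose (jn-1) * (n - (jn-1)) := by
          have := Nat.choose_succ_right_eq n (jn - 1)
          have h7 : jn - 1 + 1 = jn := by omega
          rwa [h7] at this
        have h4 : n - (jn - 1) = ln := by omega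
        have h5 : n.choose (jn - 1) = n.choose ln := by
          have hle : jn - 1 ≤ n := by omega
          have h6 : n - (jn - 1) = ln := by omega
          rw [← Nat.choose_symm hle, h6]
        rw [h4, h5] at h3
        rw [mul_comm, mul_comm jn]
        exact h3.symm
      exact_mod_cast key
end Aux
section Aux2
variable {p : ℕ} {F : Type*} [Field F] [CharP F p]

lemma intCast_pow_card (hp : p.Prime) (n : ℤ) : (n : F) ^ p = (n : F) := by
  haveI : Fact p.Prime := ⟨hp⟩
  have hdvd : (p : ℤ) ∣ n ^ p - n := by
    have : ((n ^ p - n : ℤ) : ZMod p) = 0 := by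
      push_cast
      rw [ZMod.pow_card]
      ring
    exact_mod_cast (ZMod.intCast_zmod_eq_zero_iff_dvd _ p).mp this
  have : ((n ^ p - n : ℤ) : F) = 0 := by
    rw [CharP.intCast_eq_zero_iff F p]
    exact hdvd
  push_cast at this
  linear_combination this

lemma cast_choose_pred (hp : p.Prime) {m : ℕ} (hm : m ≤ p - 1) :
    (((p-1).choose m : ℕ) : F) = (-1) ^ m := by
  induction m with
  | zero => simp
  | succ k ih =>
    have hk : k ≤ p - 1 := by omega
    have hp1 : p - 1 + 1 = p := by have := hp.two_le; omega
    have hadd : (p-1).choose k + (p-1).choose (k+1) = p.choose (k+1) := by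
      rw [← hp1]
      exact (Nat.choose_succ_succ _ _).symm
    have hdvd : (p : ℕ) ∣ p.choose (k+1) := hp.dvd_choose_self (by omega) (by omega)
    have hzero : ((p.choose (k+1) : ℕ) : F) = 0 := by
      rw [CharP.cast_eq_zero_iff F p]
      exact hdvd
    have h2 : ((p-1).choose k : F) + ((p-1).choose (k+1) : F) = 0 := by
      rw [← Nat.cast_add, hadd, hzero]
    rw [ih hk] at h2
    rw [pow_succ]
    linear_combination h2
end Aux2
section Aux3
variable {F : Type*} [Field F]

lemma mm_apply (r q : ℕ) (i j : ℤ) (x : Fin r × Fin q) :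
    mm F r q i j x = if ((x.1 : ℤ) = i ∧ (x.2 : ℤ) = j) then 1 else 0 := by
  unfold mm
  split_ifs with h h2 h3
  · rw [Pi.single_apply, if_pos]
    obtain ⟨hh1, hh2⟩ := h2
    refine Prod.ext (Fin.ext ?_) (Fin.ext ?_)
    · show (x.1 : ℕ) = i.toNat
      omega
    · show (x.2 : ℕ) = j.toNat
      omega
  · rw [Pi.single_apply, if_neg]
    intro hc
    apply h2
    rw [hc]
    obtain ⟨h1', h2', h3', h4'⟩ := h
    constructor
    · simp only []
      omega
    · simp only []
      omega
  · exfalso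
    obtain ⟨hh1, hh2⟩ := h3
    have b1 := x.1.isLt
    have b2 := x.2.isLt
    exact h ⟨by omega, by omega, by omega, by omega⟩
  · rfl

lemma ee_apply (p q : ℕ) (σ ρ : F) (j c : ℤ) (x : Fin p × Fin q) :
    ee F p q σ ρ j c x =
      if ((x.2 : ℤ) = j) then
        ((if ((x.1 : ℕ) = p - 1) then (j : F) * σ ^ (p-1) else 0)
          + alphaF F σ ρ j c ^ (x.1 : ℕ)) else 0 := by
  have hx1 := x.1.isLt
  unfold ee
  rw [Pi.add_apply, Pi.smul_apply, smul_eq_mul, Finset.sum_apply]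
  have h1 : ∀ i ∈ Finset.range p,
      (alphaF F σ ρ j c ^ i • mm F p q (i : ℤ) j) x
      = (if ((x.2 : ℤ) = j) ∧ i = (x.1 : ℕ) then alphaF F σ ρ j c ^ (x.1:ℕ) else 0) := by
    intro i hi
    rw [Pi.smul_apply, smul_eq_mul, mm_apply]
    by_cases h : ((x.1 : ℤ) = (i:ℤ) ∧ (x.2 : ℤ) = j)
    · rw [if_pos h, if_pos ⟨h.2, by omega⟩, mul_one]
      congr 1
      omega
    · rw [if_neg h, mul_zero, if_neg]
      rintro ⟨ha, hb⟩
      exact h ⟨by omega, ha⟩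
  rw [Finset.sum_congr rfl h1, mm_apply]
  by_cases ht : ((x.2 : ℤ) = j)
  · simp only [ht, true_and, and_true, if_true]
    rw [Finset.sum_ite_eq' (Finset.range p) ((x.1 : ℕ)) (fun _ => alphaF F σ ρ j c ^ (x.1:ℕ)),
      if_pos (Finset.mem_range.mpr hx1)]
    congr 1
    by_cases hs : ((x.1 : ℕ) = p - 1)
    · rw [if_pos hs, if_pos (by omega), mul_one]
    · rw [if_neg hs, if_neg (by omega), mul_zero]
  · simp only [ht, false_and, and_false, if_false, mul_zero, zero_add]
    exact Finset.sum_const_zero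
end Aux3
section Aux4
variable {F : Type*} [Field F]

lemma bB_apply (r q : ℕ) (a b : Fin r × Fin q) (x : Fin r × Fin q) :
    bB F r q a b x =
      if 0 < (a.1 : ℤ) + (b.1 : ℤ) then
        (if ((x.1 : ℤ) = (a.1 : ℤ) + (b.1 : ℤ) - 1 ∧ (x.2 : ℤ) = (a.2 : ℤ) + (b.2 : ℤ) - 1)
          then ((Ncoef (a.1 : ℤ) (a.2 : ℤ) (b.1 : ℤ) (b.2 : ℤ) : ℤ) : F) else 0)
      else
        (if ((x.1 : ℤ) = (r : ℤ) - 1 ∧ (x.2 : ℤ) = (a.2 : ℤ) + (b.2 : ℤ) - 1)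
          then ((intChoose ((a.2 : ℤ) + (b.2 : ℤ) - 1) (b.2 : ℤ) -
              intChoose ((a.2 : ℤ) + (b.2 : ℤ) - 1) (a.2 : ℤ) : ℤ) : F) else 0) := by
  unfold bB
  by_cases h : 0 < (a.1 : ℤ) + (b.1 : ℤ)
  · rw [if_pos h, if_pos h, Pi.smul_apply, smul_eq_mul, mm_apply, mul_ite, mul_one, mul_zero]
  · rw [if_neg h, if_neg h, Pi.smul_apply, smul_eq_mul, mm_apply, mul_ite, mul_one, mul_zero]

lemma br_apply_ee (p q : ℕ) (σ ρ : F) (j l c c' : ℤ)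
    (hj0 : 0 ≤ j) (hj1 : j < (q : ℤ)) (hl0 : 0 ≤ l) (hl1 : l < (q : ℤ))
    (x : Fin p × Fin q) :
    br F p q (ee F p q σ ρ j c) (ee F p q σ ρ l c') x
    = ∑ i ∈ Finset.range p, ∑ k ∈ Finset.range p,
        (((if i = p - 1 then (j : F) * σ ^ (p-1) else 0) + alphaF F σ ρ j c ^ i) *
         ((if k = p - 1 then (l : F) * σ ^ (p-1) else 0) + alphaF F σ ρ l c' ^ k)) *
        (if 0 < (i : ℤ) + (k : ℤ) then
            (if ((x.1 : ℤ) = (i : ℤ) + (k : ℤ) - 1 ∧ (x.2 : ℤ) = j + l - 1)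
              then ((Ncoef (i : ℤ) j (k : ℤ) l : ℤ) : F) else 0)
          else
            (if ((x.1 : ℤ) = (p : ℤ) - 1 ∧ (x.2 : ℤ) = j + l - 1)
              then ((intChoose (j + l - 1) l - intChoose (j + l - 1) j : ℤ) : F) else 0)) := by
  set u := ee F p q σ ρ j c with hu
  set v := ee F p q σ ρ l c' with hv
  have e1 : br F p q u v x
      = ∑ a : Fin p × Fin q, ∑ b : Fin p × Fin q, (u a * v b) * bB F p q a b x := by
    unfold br
    rw [Finset.sum_apply]
    refine Finset.sum_congr rfl fun a _ => ?_
    rw [Finset.sum_apply]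
    refine Finset.sum_congr rfl fun b _ => ?_
    rw [Pi.smul_apply, smul_eq_mul]
  rw [e1]
  have hq : 0 < q := by omega
  set jf : Fin q := ⟨j.toNat, by omega⟩ with hjf
  set lf : Fin q := ⟨l.toNat, by omega⟩ with hlf
  have hjfv : ((jf : ℕ) : ℤ) = j := by simp [hjf]; omega
  have hlfv : ((lf : ℕ) : ℤ) = l := by simp [hlf]; omega
  have huz : ∀ a1 : Fin p, ∀ a2 : Fin q, a2 ≠ jf → u (a1, a2) = 0 := by
    intro a1 a2 ha
    rw [hu, ee_apply, if_neg]
    intro hc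
    have hc2 : ((a2 : ℕ) : ℤ) = j := hc
    apply ha
    apply Fin.ext
    show (a2 : ℕ) = j.toNat
    omega
  have hvz : ∀ b1 : Fin p, ∀ b2 : Fin q, b2 ≠ lf → v (b1, b2) = 0 := by
    intro b1 b2 hb
    rw [hv, ee_apply, if_neg]
    intro hc
    have hc2 : ((b2 : ℕ) : ℤ) = l := hc
    apply hb
    apply Fin.ext
    show (b2 : ℕ) = l.toNat
    omega
  rw [Fintype.sum_prod_type]
  have e2 : ∀ a1 : Fin p,
      (∑ a2 : Fin q, ∑ b : Fin p × Fin q, (u (a1, a2) * v b) * bB F p q (a1, a2) b x)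
      = ∑ b : Fin p × Fin q, (u (a1, jf) * v b) * bB F p q (a1, jf) b x := by
    intro a1
    apply Fintype.sum_eq_single
    intro a2 ha
    rw [Finset.sum_eq_zero]
    intro b _
    rw [huz a1 a2 ha, zero_mul, zero_mul]
  rw [Finset.sum_congr rfl fun a1 _ => e2 a1]
  have e3 : ∀ a1 : Fin p,
      (∑ b : Fin p × Fin q, (u (a1, jf) * v b) * bB F p q (a1, jf) b x)
      = ∑ b1 : Fin p, (u (a1, jf) * v (b1, lf)) * bB F p q (a1, jf) (b1, lf) x := by
    intro a1
    rw [Fintype.sum_prod_type]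
    refine Finset.sum_congr rfl fun b1 _ => ?_
    apply Fintype.sum_eq_single
    intro b2 hb
    rw [hvz b1 b2 hb, mul_zero, zero_mul]
  rw [Finset.sum_congr rfl fun a1 _ => e3 a1]
  have e4 : ∀ a1 b1 : Fin p,
      (u (a1, jf) * v (b1, lf)) * bB F p q (a1, jf) (b1, lf) x
      = (((if (a1:ℕ) = p - 1 then (j : F) * σ ^ (p-1) else 0) + alphaF F σ ρ j c ^ (a1:ℕ)) *
         ((if (b1:ℕ) = p - 1 then (l : F) * σ ^ (p-1) else 0) + alphaF F σ ρ l c' ^ (b1:ℕ))) *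
        (if 0 < ((a1:ℕ) : ℤ) + ((b1:ℕ) : ℤ) then
            (if ((x.1 : ℤ) = ((a1:ℕ) : ℤ) + ((b1:ℕ) : ℤ) - 1 ∧ (x.2 : ℤ) = j + l - 1)
              then ((Ncoef ((a1:ℕ) : ℤ) j ((b1:ℕ) : ℤ) l : ℤ) : F) else 0)
          else
            (if ((x.1 : ℤ) = (p : ℤ) - 1 ∧ (x.2 : ℤ) = j + l - 1)
              then ((intChoose (j + l - 1) l - intChoose (j + l - 1) j : ℤ) : F) else 0)) := by
    intro a1 b1
    rw [hu, hv, ee_apply, ee_apply, bB_apply]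
    simp only [hjfv, hlfv, eq_self_iff_true, if_true]
  rw [Finset.sum_congr rfl fun a1 _ => Finset.sum_congr rfl fun b1 _ => e4 a1 b1]
  rw [← Fin.sum_univ_eq_sum_range]
  refine Finset.sum_congr rfl fun a1 _ => ?_
  rw [← Fin.sum_univ_eq_sum_range]

end Aux4
section Aux5
variable {F : Type*} [Field F]

lemma double_collapse (p : ℕ) (hp2 : 2 ≤ p) (s : ℕ) (hs : s < p)
    (cu cv : ℕ → F) (N : ℕ → ℕ → F) (E : F) :
    (∑ i ∈ Finset.range p, ∑ k ∈ Finset.range p, cu i * cv k *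
      (if 0 < (i : ℤ) + (k : ℤ) then (if ((s : ℤ) = (i : ℤ) + (k : ℤ) - 1) then N i k else 0)
       else (if ((s : ℤ) = (p : ℤ) - 1) then E else 0)))
    = (∑ i ∈ Finset.range p,
        if i ≤ s + 1 ∧ s + 1 - i < p then cu i * cv (s + 1 - i) * N i (s + 1 - i) else 0)
      + (if s = p - 1 then cu 0 * cv 0 * E else 0) := by
  have hinner : ∀ i ∈ Finset.range p,
      (∑ k ∈ Finset.range p, cu i * cv k *
        (if 0 < (i : ℤ) + (k : ℤ) then (if ((s : ℤ) = (i : ℤ) + (k : ℤ) - 1) then N i k else 0)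
         else (if ((s : ℤ) = (p : ℤ) - 1) then E else 0)))
      = (if i ≤ s + 1 ∧ s + 1 - i < p then cu i * cv (s + 1 - i) * N i (s + 1 - i) else 0)
        + (if i = 0 ∧ s = p - 1 then cu 0 * cv 0 * E else 0) := by
    intro i _
    by_cases hi1 : i ≤ s + 1
    · have hsplit : ∀ k ∈ Finset.range p, cu i * cv k *
          (if 0 < (i : ℤ) + (k : ℤ) then (if ((s : ℤ) = (i : ℤ) + (k : ℤ) - 1) then N i k else 0)
           else (if ((s : ℤ) = (p : ℤ) - 1) then E else 0))
          = (if k = s + 1 - i then cu i * cv k * N i k else 0)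
            + (if k = 0 then (if i = 0 ∧ s = p - 1 then cu 0 * cv 0 * E else 0) else 0) := by
        intro k _
        by_cases hik : 0 < (i : ℤ) + (k : ℤ)
        · rw [if_pos hik]
          split_ifs <;> first | ring1 | (exfalso; omega)
        · have hi0 : i = 0 := by omega
          have hk0 : k = 0 := by omega
          subst hi0; subst hk0
          rw [if_neg hik]
          simp only [eq_self_iff_true, true_and]
          split_ifs <;> first | ring1 | (exfalso; omega)
      rw [Finset.sum_congr rfl hsplit, Finset.sum_add_distrib,
        Finset.sum_ite_eq' (Finset.range p) (s + 1 - i) (fun k => cu i * cv k * N i k),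
        Finset.sum_ite_eq' (Finset.range p) 0
          (fun _ => if i = 0 ∧ s = p - 1 then cu 0 * cv 0 * E else 0)]
      congr 1
      · by_cases hm : s + 1 - i ∈ Finset.range p
        · rw [if_pos hm, if_pos ⟨hi1, by simpa using hm⟩]
        · rw [if_neg hm, if_neg (fun hc => hm (Finset.mem_range.mpr hc.2))]
      · rw [if_pos (Finset.mem_range.mpr (by omega))]
    · have hn1 : ¬(i ≤ s + 1 ∧ s + 1 - i < p) := by rintro ⟨h1, h2⟩; omega
      have hn2 : ¬(i = 0 ∧ s = p - 1) := by rintro ⟨h1, h2⟩; omega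
      rw [if_neg hn1, if_neg hn2, add_zero, Finset.sum_eq_zero]
      intro k _
      split_ifs <;> first | rfl | ring1 | (exfalso; omega)
  rw [Finset.sum_congr rfl hinner, Finset.sum_add_distrib]
  congr 1
  have hsplit2 : ∀ i ∈ Finset.range p,
      (if i = 0 ∧ s = p - 1 then cu 0 * cv 0 * E else 0)
      = (if i = 0 then (if s = p - 1 then cu 0 * cv 0 * E else 0) else 0) := by
    intro i _
    split_ifs <;> first | rfl | (exfalso; omega)
  rw [Finset.sum_congr rfl hsplit2,
    Finset.sum_ite_eq' (Finset.range p) 0 (fun _ => if s = p - 1 then cu 0 * cv 0 * E else 0),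
    if_pos (Finset.mem_range.mpr (by omega))]
end Aux5
section Aux6
variable {F : Type*} [Field F]

lemma vand1 (s : ℕ) (α β : F) :
    (∑ i ∈ Finset.range (s + 2), ((s.choose i : ℕ) : F) * α ^ i * β ^ (s + 1 - i))
    = β * (α + β) ^ s := by
  rw [Finset.sum_range_succ, Nat.choose_succ_self, Nat.cast_zero, zero_mul, zero_mul, add_zero]
  have h : ∀ i ∈ Finset.range (s + 1),
      ((s.choose i : ℕ) : F) * α ^ i * β ^ (s + 1 - i)
      = (α ^ i * β ^ (s - i) * ((s.choose i : ℕ) : F)) * β := by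
    intro i hi
    have hi' := Finset.mem_range.mp hi
    rw [show s + 1 - i = (s - i) + 1 from by omega, pow_succ]
    ring
  rw [Finset.sum_congr rfl h, ← Finset.sum_mul, ← add_pow]
  ring

lemma vand2 (s : ℕ) (α β : F) :
    (∑ i ∈ Finset.range (s + 2), ((intChoose (s : ℤ) ((i : ℤ) - 1) : ℤ) : F) * α ^ i * β ^ (s + 1 - i))
    = α * (α + β) ^ s := by
  rw [Finset.sum_range_succ']
  rw [show ((0:ℕ) : ℤ) - 1 = (-1 : ℤ) from by norm_num, intChoose_neg (by norm_num),
    Int.cast_zero, zero_mul, zero_mul, add_zero]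
  have h : ∀ i ∈ Finset.range (s + 1),
      ((intChoose (s : ℤ) (((i+1 : ℕ) : ℤ) - 1) : ℤ) : F) * α ^ (i+1) * β ^ (s + 1 - (i+1))
      = (α ^ i * β ^ (s - i) * ((s.choose i : ℕ) : F)) * α := by
    intro i hi
    have hi' := Finset.mem_range.mp hi
    rw [show ((i+1 : ℕ) : ℤ) - 1 = (i : ℤ) from by push_cast; ring, intChoose_natCast,
      show s + 1 - (i+1) = s - i from by omega, pow_succ]
    push_cast
    ring
  rw [Finset.sum_congr rfl h, ← Finset.sum_mul, ← add_pow]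
  ring

lemma telescope (p : ℕ) (hp3 : 3 ≤ p) (hodd : Odd p) (α β : F) :
    (α + β) * (∑ i ∈ Finset.range (p - 1), (-α) ^ (i + 1) * β ^ (p - 1 - i))
    = α ^ p * β - α * β ^ p := by
  rw [Finset.mul_sum]
  have h : ∀ i ∈ Finset.range (p - 1),
      (α + β) * ((-α) ^ (i + 1) * β ^ (p - 1 - i))
      = (fun m => (-α) ^ (m + 1) * β ^ (p - m)) i
        - (fun m => (-α) ^ (m + 1) * β ^ (p - m)) (i + 1) := by
    intro i hi
    have hi' := Finset.mem_range.mp hi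
    simp only []
    rw [show p - i = (p - 1 - i) + 1 from by omega, show p - (i+1) = p - 1 - i from by omega,
      pow_succ, pow_succ]
    ring
  rw [Finset.sum_congr rfl h, Finset.sum_range_sub']
  rw [show p - 0 = p from by omega, show p - 1 + 1 = p from by omega,
    show p - (p - 1) = 1 from by omega, pow_one, pow_one, hodd.neg_pow]
  ring

lemma alphaF_pow {p : ℕ} (hp : p.Prime) [CharP F p] (σ ρ : F)
    (hρ : ρ ^ p - σ ^ (p - 1) * ρ - 1 = 0) (j c : ℤ) :
    (alphaF F σ ρ j c) ^ p = σ ^ (p - 1) * alphaF F σ ρ j c + (1 - (j : F)) := by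
  haveI : Fact p.Prime := ⟨hp⟩
  unfold alphaF
  have h1 : ((1 : F) - (j : F)) ^ p = 1 - (j : F) := by
    have e : (1 : F) - (j : F) = (((1 - j : ℤ)) : F) := by push_cast; ring
    rw [e, intCast_pow_card hp]
  have h2 : ((c : F)) ^ p = (c : F) := intCast_pow_card hp c
  have h3 : ρ ^ p = σ ^ (p - 1) * ρ + 1 := by linear_combination hρ
  have h4 : σ ^ p = σ ^ (p - 1) * σ := by
    rw [← pow_succ]
    congr 1
    have := hp.two_le
    omega
  rw [add_pow_char, mul_pow, mul_pow, h1, h2, h3, h4]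
  ring
end Aux6
section Aux7
variable {F : Type*} [Field F]

lemma caseA (p : ℕ) (hp2 : 2 ≤ p) (s : ℕ) (hs : s + 1 < p) (α β σ' A B jF lF : F)
    (hK : lF * A = jF * B) :
    (∑ i ∈ Finset.range p, if i ≤ s + 1 ∧ s + 1 - i < p then
        (((if i = p - 1 then jF * σ' else 0) + α ^ i) *
         ((if s + 1 - i = p - 1 then lF * σ' else 0) + β ^ (s + 1 - i))) *
        (((s.choose i : ℕ) : F) * A - ((intChoose (s : ℤ) ((i : ℤ) - 1) : ℤ) : F) * B)
      else 0)
    = (β * A - α * B) * (α + β) ^ s := by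
  have hsub : Finset.range (s + 2) ⊆ Finset.range p := by
    intro x hx
    simp only [Finset.mem_range] at *
    omega
  have hzero : ∀ x ∈ Finset.range p, x ∉ Finset.range (s + 2) →
      (if x ≤ s + 1 ∧ s + 1 - x < p then
        (((if x = p - 1 then jF * σ' else 0) + α ^ x) *
         ((if s + 1 - x = p - 1 then lF * σ' else 0) + β ^ (s + 1 - x))) *
        (((s.choose x : ℕ) : F) * A - ((intChoose (s : ℤ) ((x : ℤ) - 1) : ℤ) : F) * B)
      else 0) = 0 := by
    intro x _ hx
    simp only [Finset.mem_range] at hx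
    rw [if_neg (by rintro ⟨h1, h2⟩; omega)]
  rw [← Finset.sum_subset hsub hzero]
  have hpos : ∀ i ∈ Finset.range (s + 2),
      (if i ≤ s + 1 ∧ s + 1 - i < p then
        (((if i = p - 1 then jF * σ' else 0) + α ^ i) *
         ((if s + 1 - i = p - 1 then lF * σ' else 0) + β ^ (s + 1 - i))) *
        (((s.choose i : ℕ) : F) * A - ((intChoose (s : ℤ) ((i : ℤ) - 1) : ℤ) : F) * B)
      else 0)
      = ((((s.choose i : ℕ) : F) * α ^ i * β ^ (s + 1 - i)) * A
          - (((intChoose (s : ℤ) ((i : ℤ) - 1) : ℤ) : F) * α ^ i * β ^ (s + 1 - i)) * B)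
        + (if i = p - 1 then (jF * σ') * β ^ (s + 1 - i) *
            (((s.choose i : ℕ) : F) * A - ((intChoose (s : ℤ) ((i : ℤ) - 1) : ℤ) : F) * B) else 0)
        + (if i = 0 ∧ s = p - 2 then (lF * σ') * α ^ i *
            (((s.choose i : ℕ) : F) * A - ((intChoose (s : ℤ) ((i : ℤ) - 1) : ℤ) : F) * B) else 0) := by
    intro i hi
    have hi' := Finset.mem_range.mp hi
    rw [if_pos (by omega)]
    split_ifs <;> first | ring1 | (exfalso; omega)
  rw [Finset.sum_congr rfl hpos, Finset.sum_add_distrib, Finset.sum_add_distrib,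
    Finset.sum_sub_distrib, ← Finset.sum_mul, ← Finset.sum_mul, vand1, vand2]
  have hsum2 : (∑ i ∈ Finset.range (s + 2), if i = p - 1 then (jF * σ') * β ^ (s + 1 - i) *
      (((s.choose i : ℕ) : F) * A - ((intChoose (s : ℤ) ((i : ℤ) - 1) : ℤ) : F) * B) else 0)
      + (∑ i ∈ Finset.range (s + 2), if i = 0 ∧ s = p - 2 then (lF * σ') * α ^ i *
      (((s.choose i : ℕ) : F) * A - ((intChoose (s : ℤ) ((i : ℤ) - 1) : ℤ) : F) * B) else 0)
      = 0 := by
    rw [Finset.sum_ite_eq' (Finset.range (s + 2)) (p - 1)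
      (fun i => (jF * σ') * β ^ (s + 1 - i) *
        (((s.choose i : ℕ) : F) * A - ((intChoose (s : ℤ) ((i : ℤ) - 1) : ℤ) : F) * B))]
    by_cases hsp : s = p - 2
    · subst hsp
      have hm : p - 1 ∈ Finset.range (p - 2 + 2) := Finset.mem_range.mpr (by omega)
      rw [if_pos hm]
      have hsplit : ∀ i ∈ Finset.range (p - 2 + 2),
          (if i = 0 ∧ (p-2 : ℕ) = p - 2 then (lF * σ') * α ^ i *
            ((((p-2).choose i : ℕ) : F) * A - ((intChoose ((p-2 : ℕ) : ℤ) ((i : ℤ) - 1) : ℤ) : F) * B) else 0)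
          = (if i = 0 then (lF * σ') * α ^ i *
            ((((p-2).choose i : ℕ) : F) * A - ((intChoose ((p-2 : ℕ) : ℤ) ((i : ℤ) - 1) : ℤ) : F) * B) else 0) := by
        intro i _
        split_ifs <;> first | rfl | (exfalso; omega)
      rw [Finset.sum_congr rfl hsplit,
        Finset.sum_ite_eq' (Finset.range (p - 2 + 2)) 0
          (fun i => (lF * σ') * α ^ i *
            ((((p-2).choose i : ℕ) : F) * A - ((intChoose ((p-2 : ℕ) : ℤ) ((i : ℤ) - 1) : ℤ) : F) * B)),
        if_pos (Finset.mem_range.mpr (by omega))]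
      have e1 : ((p-2).choose (p-1) : F) = 0 := by
        rw [Nat.choose_eq_zero_of_lt (by omega), Nat.cast_zero]
      have e2 : ((intChoose ((p-2 : ℕ) : ℤ) (((p-1 : ℕ) : ℤ) - 1) : ℤ) : F) = 1 := by
        rw [show (((p-1 : ℕ)) : ℤ) - 1 = ((p-2 : ℕ) : ℤ) from by omega, intChoose_natCast,
          Nat.choose_self]
        norm_num
      have e3 : ((intChoose ((p-2 : ℕ) : ℤ) (((0 : ℕ) : ℤ) - 1) : ℤ) : F) = 0 := by
        rw [show (((0:ℕ)) : ℤ) - 1 = (-1 : ℤ) from by norm_num, intChoose_neg (by norm_num)]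
        norm_num
      have e4 : ((p-2).choose 0 : F) = 1 := by norm_num
      rw [e1, e2, e3, e4]
      rw [show p - 2 + 1 - (p - 1) = 0 from by omega, pow_zero, pow_zero]
      linear_combination σ' * hK
    · rw [if_neg (by simp only [Finset.mem_range]; omega), Finset.sum_eq_zero (fun i _ => by
        rw [if_neg (by rintro ⟨h1, h2⟩; exact hsp h2)]), add_zero]
  linear_combination hsum2

lemma caseB (p : ℕ) (hp : p.Prime) (hodd : p ≠ 2) [CharP F p]
    (α β γ σ' A B jF lF JF : F)
    (hK : lF * A = jF * B) (hγ : γ = α + β)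
    (hαp : α ^ p = σ' * α + (1 - jF)) (hβp : β ^ p = σ' * β + (1 - lF))
    (hγp : γ ^ p = σ' * γ + (1 - JF)) (hJ : JF = jF + lF - 1) :
    (∑ i ∈ Finset.range p, if i ≤ (p-1) + 1 ∧ (p-1) + 1 - i < p then
        (((if i = p - 1 then jF * σ' else 0) + α ^ i) *
         ((if (p-1) + 1 - i = p - 1 then lF * σ' else 0) + β ^ ((p-1) + 1 - i))) *
        ((((p-1).choose i : ℕ) : F) * A - ((intChoose ((p-1 : ℕ) : ℤ) ((i : ℤ) - 1) : ℤ) : F) * B)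
      else 0)
    + ((if (0:ℕ) = p - 1 then jF * σ' else 0) + α ^ 0) *
        ((if (0:ℕ) = p - 1 then lF * σ' else 0) + β ^ 0) * (A - B)
    = (β * A - α * B) * (JF * σ' + γ ^ (p-1)) := by
  have hp3 : 3 ≤ p := by
    have h2 := hp.two_le
    rcases Nat.lt_or_ge p 3 with h | h
    · interval_cases p
      · exact absurd rfl hodd
    · exact h
  have hoddp : Odd p := hp.odd_of_ne_two hodd
  -- simplify the (0,0) term
  rw [if_neg (by omega : ¬ (0:ℕ) = p - 1), pow_zero, zero_add, one_mul,
    if_neg (by omega : ¬ (0:ℕ) = p - 1), pow_zero, zero_add, one_mul]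
  rw [show Finset.range p = Finset.range (p - 1 + 1) from by congr 1; omega,
    Finset.sum_range_succ',
    if_neg (by rintro ⟨h1, h2⟩; omega :
      ¬((0:ℕ) ≤ (p-1) + 1 ∧ (p-1) + 1 - 0 < p)), add_zero]
  have hterm : ∀ i ∈ Finset.range (p-1),
      (if (i+1) ≤ (p-1) + 1 ∧ (p-1) + 1 - (i+1) < p then
        (((if (i+1) = p - 1 then jF * σ' else 0) + α ^ (i+1)) *
         ((if (p-1) + 1 - (i+1) = p - 1 then lF * σ' else 0) + β ^ ((p-1) + 1 - (i+1)))) *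
        ((((p-1).choose (i+1) : ℕ) : F) * A - ((intChoose ((p-1 : ℕ) : ℤ) (((i+1 : ℕ) : ℤ) - 1) : ℤ) : F) * B)
      else 0)
      = ((-α) ^ (i+1) * β ^ (p-1-i)) * (A + B)
        + (if i = p - 2 then jF * σ' * β ^ (p-1-i) * ((-1:F)^(i+1) * A - (-1:F)^i * B) else 0)
        + (if i = 0 then lF * σ' * α ^ (i+1) * ((-1:F)^(i+1) * A - (-1:F)^i * B) else 0) := by
    intro i hi
    have hi' := Finset.mem_range.mp hi
    rw [if_pos ⟨by omega, by omega⟩,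
      show (p-1) + 1 - (i+1) = p - 1 - i from by omega,
      cast_choose_pred hp (show i + 1 ≤ p - 1 by omega),
      show ((i+1 : ℕ) : ℤ) - 1 = (i : ℤ) from by push_cast; ring, intChoose_natCast, Int.cast_natCast,
      cast_choose_pred hp (show i ≤ p - 1 by omega)]
    split_ifs <;> first | ring1 | (exfalso; omega)
  rw [Finset.sum_congr rfl hterm, Finset.sum_add_distrib, Finset.sum_add_distrib,
    ← Finset.sum_mul,
    Finset.sum_ite_eq' (Finset.range (p-1)) (p-2)
      (fun i => jF * σ' * β ^ (p-1-i) * ((-1:F)^(i+1) * A - (-1:F)^i * B)),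
    if_pos (Finset.mem_range.mpr (by omega)),
    Finset.sum_ite_eq' (Finset.range (p-1)) 0
      (fun i => lF * σ' * α ^ (i+1) * ((-1:F)^(i+1) * A - (-1:F)^i * B)),
    if_pos (Finset.mem_range.mpr (by omega))]
  have heven : Even (p - 1) := Nat.Odd.sub_odd hoddp odd_one
  have hoddp2 : Odd (p - 2) := Nat.Odd.sub_even (by omega) hoddp (by norm_num)
  rw [show p - 1 - (p - 2) = 1 from by omega, pow_one,
    show p - 2 + 1 = p - 1 from by omega, heven.neg_one_pow, hoddp2.neg_one_pow,
    show (0:ℕ) + 1 = 1 from by norm_num, pow_one, pow_one, pow_zero]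
  have hS := telescope p hp3 hoddp α β
  by_cases hγ0 : γ = 0
  · have hβneg : β = -α := by linear_combination hγ0 - hγ
    have hS0 : (∑ i ∈ Finset.range (p-1), (-α) ^ (i+1) * β ^ (p-1-i)) = α ^ p := by
      have hterm2 : ∀ i ∈ Finset.range (p-1),
          (-α) ^ (i+1) * β ^ (p-1-i) = -(α ^ p) := by
        intro i hi
        have hi' := Finset.mem_range.mp hi
        rw [hβneg, ← pow_add, show i + 1 + (p - 1 - i) = p from by omega, hoddp.neg_pow]
      rw [Finset.sum_congr rfl hterm2, Finset.sum_const, Finset.card_range, nsmul_eq_mul]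
      have hcast : ((p-1 : ℕ) : F) = -1 := by
        rw [Nat.cast_sub (by omega), Nat.cast_one, CharP.cast_eq_zero F p]
        ring
      rw [hcast]
      ring
    have hJF1 : JF = 1 := by
      rw [hγ0, zero_pow (by omega : p ≠ 0)] at hγp
      linear_combination hγp
    have hjl : jF + lF = 2 := by linear_combination hJF1 - hJ
    rw [hγ0, zero_pow (by omega : p - 1 ≠ 0)]
    linear_combination (A+B) * hS0 + (A+B) * hαp + (B*jF*σ' - A*JF*σ' + A*jF*σ') * hβneg
      + (α*σ'*(A+B)) * hJF1 + (-(α*B*σ') - α*A*σ' - A) * hjl + hK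
  · rw [hγ] at hγ0 hγp ⊢
    apply mul_left_cancel₀ hγ0
    have hpow : (α+β) * (α+β) ^ (p-1) = (α+β) ^ p := by
      rw [← pow_succ']
      congr 1
      omega
    linear_combination (A+B) * hS + β*(A+B) * hαp - α*(A+B) * hβp
      - (β*A - α*B) * hpow - (β*A - α*B) * hγp
      + ((β*A - α*B) * (1 - σ'*(α+β))) * hJ + ((α+β) * (1 - σ'*(α+β))) * hK
end Aux7
section Aux8

lemma key_main (p : ℕ) (hp : p.Prime) (hodd : p ≠ 2) {F : Type*} [Field F] [CharP F p]
    (q : ℕ) (σ ρ : F) (hρ : ρ ^ p - σ ^ (p - 1) * ρ - 1 = 0)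
    (j l : ℤ) (hj0 : 0 ≤ j) (hj1 : j < (q : ℤ)) (hl0 : 0 ≤ l) (hl1 : l < (q : ℤ)) (c c' : ℤ) :
    br F p q (ee F p q σ ρ j c) (ee F p q σ ρ l c') =
      (alphaF F σ ρ l c' * ((intChoose (j + l - 1) l : ℤ) : F) -
        alphaF F σ ρ j c * ((intChoose (j + l - 1) j : ℤ) : F)) •
        ee F p q σ ρ (j + l - 1) (c + c') := by
  have hK : (l : F) * ((intChoose (j + l - 1) l : ℤ) : F)
      = (j : F) * ((intChoose (j + l - 1) j : ℤ) : F) := by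
    have h := key_lin j l hj0 hl0
    have h2 : ((l * intChoose (j + l - 1) l : ℤ) : F) = ((j * intChoose (j + l - 1) j : ℤ) : F) := by
      exact_mod_cast congrArg (fun z : ℤ => (z : F)) h
    push_cast at h2
    exact h2
  have hγ : alphaF F σ ρ (j + l - 1) (c + c') = alphaF F σ ρ j c + alphaF F σ ρ l c' := by
    unfold alphaF
    push_cast
    ring
  have hαp := alphaF_pow hp σ ρ hρ j c
  have hβp := alphaF_pow hp σ ρ hρ l c'
  have hγp := alphaF_pow hp σ ρ hρ (j + l - 1) (c + c')
  have hJ : ((j + l - 1 : ℤ) : F) = (j : F) + (l : F) - 1 := by push_cast; ring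
  funext x
  have hx1 : (x.1 : ℕ) < p := x.1.isLt
  rw [br_apply_ee p q σ ρ j l c c' hj0 hj1 hl0 hl1 x, Pi.smul_apply, smul_eq_mul, ee_apply]
  by_cases ht : ((x.2 : ℤ) = j + l - 1)
  swap
  · rw [if_neg ht, mul_zero]
    refine Finset.sum_eq_zero fun i _ => Finset.sum_eq_zero fun k _ => ?_
    have hf1 : ¬(((x.1 : ℤ) = (i : ℤ) + (k : ℤ) - 1) ∧ ((x.2 : ℤ) = j + l - 1)) :=
      fun hcc => ht hcc.2
    have hf2 : ¬(((x.1 : ℤ) = (p : ℤ) - 1) ∧ ((x.2 : ℤ) = j + l - 1)) :=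
      fun hcc => ht hcc.2
    by_cases h0 : 0 < (i : ℤ) + (k : ℤ)
    · rw [if_pos h0, if_neg hf1, mul_zero]
    · rw [if_neg h0, if_neg hf2, mul_zero]
  · rw [if_pos ht]
    simp only [ht, eq_self_iff_true, and_true]
    have hdc := double_collapse p hp.two_le (x.1 : ℕ) hx1
      (fun i => (if i = p - 1 then (j : F) * σ ^ (p-1) else 0) + alphaF F σ ρ j c ^ i)
      (fun k => (if k = p - 1 then (l : F) * σ ^ (p-1) else 0) + alphaF F σ ρ l c' ^ k)
      (fun i k => ((Ncoef (i : ℤ) j (k : ℤ) l : ℤ) : F))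
      (((intChoose (j + l - 1) l - intChoose (j + l - 1) j : ℤ)) : F)
    rw [hdc]
    have hNN : ∀ i ∈ Finset.range p,
        (if i ≤ (x.1 : ℕ) + 1 ∧ (x.1 : ℕ) + 1 - i < p then
          (((if i = p - 1 then (j : F) * σ ^ (p-1) else 0) + alphaF F σ ρ j c ^ i) *
           ((if (x.1 : ℕ) + 1 - i = p - 1 then (l : F) * σ ^ (p-1) else 0) +
              alphaF F σ ρ l c' ^ ((x.1 : ℕ) + 1 - i))) *
          ((Ncoef (i : ℤ) j ((((x.1 : ℕ) + 1 - i : ℕ)) : ℤ) l : ℤ) : F)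
        else 0)
        = (if i ≤ (x.1 : ℕ) + 1 ∧ (x.1 : ℕ) + 1 - i < p then
          (((if i = p - 1 then (j : F) * σ ^ (p-1) else 0) + alphaF F σ ρ j c ^ i) *
           ((if (x.1 : ℕ) + 1 - i = p - 1 then (l : F) * σ ^ (p-1) else 0) +
              alphaF F σ ρ l c' ^ ((x.1 : ℕ) + 1 - i))) *
          ((((x.1 : ℕ).choose i : ℕ) : F) * ((intChoose (j + l - 1) l : ℤ) : F)
            - ((intChoose (((x.1 : ℕ)) : ℤ) ((i : ℤ) - 1) : ℤ) : F) *
                ((intChoose (j + l - 1) j : ℤ) : F))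
        else 0) := by
      intro i _
      by_cases hc : i ≤ (x.1 : ℕ) + 1 ∧ (x.1 : ℕ) + 1 - i < p
      · rw [if_pos hc, if_pos hc]
        congr 1
        have hz : Ncoef (i : ℤ) j ((((x.1 : ℕ) + 1 - i : ℕ)) : ℤ) l
            = intChoose (((x.1 : ℕ)) : ℤ) (i : ℤ) * intChoose (j + l - 1) l
              - intChoose (((x.1 : ℕ)) : ℤ) ((i : ℤ) - 1) * intChoose (j + l - 1) j := by
          unfold Ncoef
          rw [show (i : ℤ) + ((((x.1 : ℕ) + 1 - i : ℕ)) : ℤ) - 1 = (((x.1 : ℕ)) : ℤ) from by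
              have := hc.1; omega,
            intChoose_symm j l hj0 hl0]
        rw [hz, intChoose_natCast]
        push_cast
        ring
      · rw [if_neg hc, if_neg hc]
    rw [Finset.sum_congr rfl hNN,
      show (((intChoose (j + l - 1) l - intChoose (j + l - 1) j : ℤ)) : F)
        = ((intChoose (j + l - 1) l : ℤ) : F) - ((intChoose (j + l - 1) j : ℤ) : F) from by
        push_cast; ring]
    by_cases hsp : (x.1 : ℕ) = p - 1
    · rw [hsp, if_pos rfl, if_pos rfl]
      exact caseB p hp hodd (alphaF F σ ρ j c) (alphaF F σ ρ l c')
        (alphaF F σ ρ (j + l - 1) (c + c')) (σ ^ (p-1))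
        ((intChoose (j + l - 1) l : ℤ) : F) ((intChoose (j + l - 1) j : ℤ) : F)
        ((j : ℤ) : F) ((l : ℤ) : F) ((j + l - 1 : ℤ) : F)
        hK hγ hαp hβp hγp hJ
    · rw [if_neg hsp, if_neg hsp, add_zero, zero_add, hγ]
      exact caseA p hp.two_le (x.1 : ℕ) (by omega) (alphaF F σ ρ j c) (alphaF F σ ρ l c')
        (σ ^ (p-1)) ((intChoose (j + l - 1) l : ℤ) : F) ((intChoose (j + l - 1) j : ℤ) : F)
        ((j : ℤ) : F) ((l : ℤ) : F) hK

end Aux8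
theorem stmt6 (p : ℕ) (hp : p.Prime) (hodd : p ≠ 2) (F : Type*) [Field F] [CharP F p]
    (n2 : ℕ) (hn2 : 0 < n2) (σ ρ : F) (hσ : σ ≠ 0)
    (hρ : ρ ^ p - σ ^ (p - 1) * ρ - 1 = 0) :
    ∀ j l : ℤ, 0 ≤ j → j ≤ (p ^ n2 : ℤ) - 1 → 0 ≤ l → l ≤ (p ^ n2 : ℤ) - 1 →
      ∀ c c' : ℤ,
        (0 ≤ j + l - 1 → j + l - 1 ≤ (p ^ n2 : ℤ) - 1 →
          br F p (p ^ n2) (ee F p (p ^ n2) σ ρ j c) (ee F p (p ^ n2) σ ρ l c') =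
            (alphaF F σ ρ l c' * ((intChoose (j + l - 1) l : ℤ) : F) -
              alphaF F σ ρ j c * ((intChoose (j + l - 1) j : ℤ) : F)) •
              ee F p (p ^ n2) σ ρ (j + l - 1) (c + c')) ∧
        (j + l - 1 < 0 ∨ (p ^ n2 : ℤ) - 1 < j + l - 1 →
          br F p (p ^ n2) (ee F p (p ^ n2) σ ρ j c) (ee F p (p ^ n2) σ ρ l c') = 0) := by
  intro j l hj0 hj1 hl0 hl1 c c'
  have hcast : (((p ^ n2 : ℕ)) : ℤ) = (p : ℤ) ^ n2 := by push_cast; ring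
  have key := key_main p hp hodd (p ^ n2) σ ρ hρ j l hj0 (by omega) hl0 (by omega) c c'
  constructor
  · intro _ _
    exact key
  · intro hout
    rw [key]
    have hz : ee F p (p ^ n2) σ ρ (j + l - 1) (c + c') = 0 := by
      funext x
      have hcond : ¬((x.2 : ℤ) = j + l - 1) := by
        intro hc
        have hxlt : (x.2 : ℕ) < p ^ n2 := x.2.isLt
        have hxlt2 : ((x.2 : ℕ) : ℤ) < (((p ^ n2 : ℕ)) : ℤ) := by exact_mod_cast hxlt
        rcases hout with h | h <;> omega
      rw [ee_apply, if_neg hcond]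
      rfl
    rw [hz, smul_zero]
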